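/- Let f : ℝ^d → ℝ be twice continuously differentiable on the closed ball D of radius r centered at c ∈ ℝ^d, and suppose all second partial derivatives satisfy |∂²f/∂ϑ_i∂ϑ_j(ϑ)| ≤ M for ϑ ∈ D. Then |∫_D f(ϑ) dϑ − f(c)·vol(D)| ≤ (M d²/2) · (d/(d+2)) · vol(D) · r². -/

import Mathlib

/-!
On the open ball the entrywise bound on the Hessian bounds its operator norm by `d M`, so the
second-order Taylor estimate gives `|f ϑ - f c - Df(c)(ϑ - c)| ≤ (d M / 2) ‖ϑ - c‖²`. Integrating
over the ball, the linear term vanishes because it is odd about `c`, and polar coordinates give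
`∫ ‖ϑ - c‖² = d / (d + 2) · vol · r²`. The bounding sphere is a null set, so the open ball may
replace the closed one, and `d ≤ d²` finishes.
-/

open MeasureTheory Metric Set Module

section Taylor

variable {E F : Type*} [NormedAddCommGroup E] [NormedSpace ℝ E] [NormedAddCommGroup F]
  [NormedSpace ℝ F] {f : E → F} {s : Set E} {x y : E} {K : ℝ}

theorem Convex.norm_sub_sub_fderiv_le_of_norm_fderiv_sub_le (hs : Convex ℝ s)
    (hf : ∀ z ∈ s, DifferentiableAt ℝ f z) (hx : x ∈ s) (hy : y ∈ s)
    (hK : ∀ z ∈ s, ‖fderiv ℝ f z - fderiv ℝ f x‖ ≤ K * ‖z - x‖) :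
    ‖f y - f x - fderiv ℝ f x (y - x)‖ ≤ K / 2 * ‖y - x‖ ^ 2 := by
  set v := y - x
  have hseg : ∀ t ∈ Icc (0 : ℝ) 1, x + t • v ∈ s := fun t ht => hs.add_smul_sub_mem hx hy ht
  let φ : ℝ → F := fun t => f (x + t • v) - f x - t • fderiv ℝ f x v
  have hφ : ∀ t ∈ Icc (0 : ℝ) 1,
      HasDerivAt φ ((fderiv ℝ f (x + t • v) - fderiv ℝ f x) v) t := by
    intro t ht
    have hline : HasDerivAt (fun t : ℝ => x + t • v) v t := by
      simpa using ((hasDerivAt_id t).smul_const v).const_add x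
    have := (((hf _ (hseg t ht)).hasFDerivAt.comp_hasDerivAt t hline).sub_const (f x)).fun_sub
      ((hasDerivAt_id t).smul_const (fderiv ℝ f x v))
    simpa using this
  have hbound : ∀ t ∈ Ico (0 : ℝ) 1,
      ‖(fderiv ℝ f (x + t • v) - fderiv ℝ f x) v‖ ≤ K * ‖v‖ ^ 2 * t := by
    intro t ht
    calc ‖(fderiv ℝ f (x + t • v) - fderiv ℝ f x) v‖
        ≤ K * ‖x + t • v - x‖ * ‖v‖ :=
          ((fderiv ℝ f _ - fderiv ℝ f x).le_opNorm v).trans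
            (mul_le_mul_of_nonneg_right (hK _ (hseg t (Ico_subset_Icc_self ht)))
              (norm_nonneg v))
      _ = K * ‖v‖ ^ 2 * t := by
        rw [add_sub_cancel_left, norm_smul, Real.norm_of_nonneg ht.1]; ring
  have key := image_norm_le_of_norm_deriv_right_le_deriv_boundary (a := 0) (b := 1)
    (B := fun t => K / 2 * ‖v‖ ^ 2 * t ^ 2) (B' := fun t => K * ‖v‖ ^ 2 * t)
    (fun t ht => (hφ t ht).continuousAt.continuousWithinAt)
    (fun t ht => (hφ t (Ico_subset_Icc_self ht)).hasDerivWithinAt) (by simp [φ])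
    (fun t => ((hasDerivAt_pow 2 t).const_mul (K / 2 * ‖v‖ ^ 2)).congr_deriv
      (by simp; ring))
    hbound (right_mem_Icc.2 zero_le_one)
  simpa [φ, v, mul_comm] using key

theorem Convex.norm_sub_sub_fderiv_le (hs : Convex ℝ s) (hf : ∀ z ∈ s, DifferentiableAt ℝ f z)
    (hf' : ∀ z ∈ s, DifferentiableAt ℝ (fderiv ℝ f) z)
    (hK : ∀ z ∈ s, ‖fderiv ℝ (fderiv ℝ f) z‖ ≤ K) (hx : x ∈ s) (hy : y ∈ s) :
    ‖f y - f x - fderiv ℝ f x (y - x)‖ ≤ K / 2 * ‖y - x‖ ^ 2 :=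
  hs.norm_sub_sub_fderiv_le_of_norm_fderiv_sub_le hf hx hy fun _ hz =>
    hs.norm_image_sub_le_of_norm_fderiv_le hf' hK hx hz

end Taylor

theorem EuclideanSpace.sum_abs_le_sqrt_card_mul_norm {ι : Type*} [Fintype ι]
    (u : EuclideanSpace ℝ ι) : ∑ i, |u i| ≤ √(Fintype.card ι) * ‖u‖ := by
  rw [← Real.sqrt_sq (norm_nonneg u), ← Real.sqrt_mul (Nat.cast_nonneg _)]
  refine Real.le_sqrt_of_sq_le ?_
  rw [EuclideanSpace.norm_sq_eq]
  simpa using sq_sum_le_card_mul_sum_sq (s := Finset.univ) (f := fun i => |u i|)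

theorem OrthonormalBasis.opNorm_le_sqrt_card_mul_of_norm_apply_le {ι E F : Type*} [Fintype ι]
    [NormedAddCommGroup E] [InnerProductSpace ℝ E] [NormedAddCommGroup F] [NormedSpace ℝ F]
    (b : OrthonormalBasis ι ℝ E) (L : E →L[ℝ] F) {C : ℝ} (hC : 0 ≤ C)
    (h : ∀ i, ‖L (b i)‖ ≤ C) : ‖L‖ ≤ √(Fintype.card ι) * C := by
  refine L.opNorm_le_bound (by positivity) fun v => ?_
  calc ‖L v‖ = ‖∑ i, b.repr v i • L (b i)‖ := by
        conv_lhs => rw [← b.sum_repr v]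
        simp
    _ ≤ ∑ i, |b.repr v i| * C := by
        refine norm_sum_le_of_le _ fun i _ => ?_
        rw [norm_smul, Real.norm_eq_abs]
        exact mul_le_mul_of_nonneg_left (h i) (abs_nonneg _)
    _ = C * ∑ i, |b.repr v i| := by rw [Finset.mul_sum]; simp_rw [mul_comm]
    _ ≤ C * (√(Fintype.card ι) * ‖b.repr v‖) :=
        mul_le_mul_of_nonneg_left (EuclideanSpace.sum_abs_le_sqrt_card_mul_norm _) hC
    _ = √(Fintype.card ι) * C * ‖v‖ := by rw [b.repr.norm_map]; ring

theorem OrthonormalBasis.opNorm_le_card_mul_of_norm_apply₂_le {ι E F : Type*} [Fintype ι]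
    [NormedAddCommGroup E] [InnerProductSpace ℝ E] [NormedAddCommGroup F] [NormedSpace ℝ F]
    (b : OrthonormalBasis ι ℝ E) (A : E →L[ℝ] E →L[ℝ] F) {M : ℝ} (hM : 0 ≤ M)
    (h : ∀ i j, ‖A (b i) (b j)‖ ≤ M) : ‖A‖ ≤ Fintype.card ι * M :=
  calc ‖A‖ ≤ √(Fintype.card ι) * (√(Fintype.card ι) * M) :=
        b.opNorm_le_sqrt_card_mul_of_norm_apply_le A (by positivity) fun i =>
          b.opNorm_le_sqrt_card_mul_of_norm_apply_le (A (b i)) hM (h i)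
    _ = Fintype.card ι * M := by rw [← mul_assoc, Real.mul_self_sqrt (Nat.cast_nonneg _)]

theorem EuclideanSpace.norm_fderiv_fderiv_le_card_mul {ι : Type*} [Fintype ι] [DecidableEq ι]
    {f : EuclideanSpace ℝ ι → ℝ} {x : EuclideanSpace ℝ ι} {M : ℝ} (hM : 0 ≤ M)
    (hf : DifferentiableAt ℝ (fderiv ℝ f) x)
    (h : ∀ i j, |fderiv ℝ (fun y => fderiv ℝ f y (single i 1)) x (single j 1)| ≤ M) :
    ‖fderiv ℝ (fderiv ℝ f) x‖ ≤ Fintype.card ι * M :=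
  (basisFun ι ℝ).opNorm_le_card_mul_of_norm_apply₂_le _ hM fun i j => by
    simpa [fderiv_clm_apply hf (differentiableAt_const _)] using h j i

namespace MeasureTheory

variable {E F : Type*} [NormedAddCommGroup E] [MeasurableSpace E] [BorelSpace E]
  [NormedAddCommGroup F] [NormedSpace ℝ F] (μ : Measure E)

theorem setIntegral_ball_comp_sub [μ.IsAddRightInvariant] (g : E → F) (c : E) (r : ℝ) :
    ∫ x in ball c r, g (x - c) ∂μ = ∫ x in ball 0 r, g x ∂μ := by
  have hpre : (· - c) ⁻¹' ball (0 : E) r = ball c r := by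
    ext x; simp [dist_eq_norm]
  rw [← hpre]
  exact (measurePreserving_sub_right μ c).setIntegral_preimage_emb
    (measurableEmbedding_subRight c) g (ball 0 r)

theorem setIntegral_ball_eq_zero_of_odd [μ.IsNegInvariant] {g : E → F}
    (hg : ∀ x, g (-x) = -g x) (r : ℝ) : ∫ x in ball 0 r, g x ∂μ = 0 := by
  have h := (Measure.measurePreserving_neg μ).setIntegral_preimage_emb
    (MeasurableEquiv.neg E).measurableEmbedding g (ball 0 r)
  rw [show Neg.neg ⁻¹' ball (0 : E) r = ball 0 r by ext; simp] at h
  simp only [hg, integral_neg] at h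
  rw [neg_eq_iff_add_eq_zero, ← two_smul ℝ, smul_eq_zero] at h
  exact h.resolve_left two_ne_zero

variable [NormedSpace ℝ E] [FiniteDimensional ℝ E] [Nontrivial E] [μ.IsAddHaarMeasure]

theorem Measure.addHaar_ball_ae_eq_closedBall (c : E) (r : ℝ) :
    ball c r =ᵐ[μ] closedBall c r :=
  ae_eq_of_subset_of_measure_ge ball_subset_closedBall
    (Measure.addHaar_closedBall_eq_addHaar_ball μ c r).le measurableSet_ball.nullMeasurableSet
    measure_closedBall_lt_top.ne

theorem setIntegral_ball_norm_pow (p : ℕ) {r : ℝ} (hr : 0 ≤ r) :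
    ∫ x in ball (0 : E) r, ‖x‖ ^ p ∂μ
      = finrank ℝ E / (finrank ℝ E + p) * μ.real (ball 0 r) * r ^ p := by
  set d := finrank ℝ E
  have hd : 0 < d := finrank_pos
  have hball : ∫ x in ball (0 : E) r, ‖x‖ ^ p ∂μ = ∫ x, (Iio r).indicator (· ^ p) ‖x‖ ∂μ := by
    rw [← integral_indicator measurableSet_ball]
    congr 1 with x
    by_cases hx : ‖x‖ < r <;> simp [indicator, hx]
  have hradial : ∫ y in Ioi (0 : ℝ), y ^ (d - 1) • (Iio r).indicator (· ^ p) y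
      = r ^ (d + p) / (d + p) := by
    have hpow : ∀ y : ℝ, y ^ (d - 1) * y ^ p = y ^ (d + p - 1) := fun y => by
      rw [← pow_add]; congr 1; omega
    simp only [smul_eq_mul, ← indicator_mul_right (Iio r) (fun y : ℝ => y ^ (d - 1)), hpow]
    rw [setIntegral_indicator measurableSet_Iio, Ioi_inter_Iio, ← integral_Ioc_eq_integral_Ioo,
      ← intervalIntegral.integral_of_le hr, integral_pow, Nat.sub_add_cancel (by omega),
      zero_pow (by omega), sub_zero, Nat.cast_sub (by omega)]
    push_cast
    ring
  have hvol : μ.real (ball 0 r) = r ^ d * μ.real (ball 0 1) := by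
    simp [measureReal_def, Measure.addHaar_ball μ 0 hr, ENNReal.toReal_mul, hr, d]
  rw [hball, integral_fun_norm_addHaar, hradial, hvol, nsmul_eq_mul, smul_eq_mul]
  field_simp
  ring

theorem abs_setIntegral_ball_sub_le {f : E → ℝ} {c : E} {r K : ℝ} (hr : 0 ≤ r)
    (hf : IntegrableOn f (ball c r) μ) (L : E →L[ℝ] ℝ)
    (hK : ∀ x ∈ ball c r, |f x - f c - L (x - c)| ≤ K / 2 * ‖x - c‖ ^ 2) :
    |∫ x in ball c r, f x ∂μ - f c * μ.real (ball c r)|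
      ≤ K / 2 * (finrank ℝ E / (finrank ℝ E + 2) * μ.real (ball c r) * r ^ 2) := by
  have hcont : ∀ g : E → ℝ, Continuous g → IntegrableOn g (ball c r) μ := fun g hg =>
    (hg.continuousOn.integrableOn_compact (isCompact_closedBall c r)).mono_set
      ball_subset_closedBall
  have hL : ∫ x in ball c r, L (x - c) ∂μ = 0 := by
    rw [setIntegral_ball_comp_sub μ L]
    exact setIntegral_ball_eq_zero_of_odd μ (map_neg L) r
  have hmoment : ∫ x in ball c r, ‖x - c‖ ^ 2 ∂μ
      = finrank ℝ E / (finrank ℝ E + 2) * μ.real (ball c r) * r ^ 2 := by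
    rw [setIntegral_ball_comp_sub μ (‖·‖ ^ 2), setIntegral_ball_norm_pow μ 2 hr,
      ← Measure.addHaar_real_ball_center μ c r]
    norm_num
  have hremainder : ∫ x in ball c r, f x ∂μ - f c * μ.real (ball c r)
      = ∫ x in ball c r, (f x - f c - L (x - c)) ∂μ := by
    have hf' : IntegrableOn (fun x => f x - f c) (ball c r) μ := hf.sub (hcont _ continuous_const)
    rw [integral_sub hf' (hcont _ (by fun_prop)),
      integral_sub hf (hcont _ continuous_const), hL, setIntegral_const, smul_eq_mul]
    ring
  calc |∫ x in ball c r, f x ∂μ - f c * μ.real (ball c r)|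
      ≤ ∫ x in ball c r, K / 2 * ‖x - c‖ ^ 2 ∂μ := by
        rw [hremainder, ← Real.norm_eq_abs]
        exact norm_integral_le_of_norm_le (hcont _ (by fun_prop))
          ((ae_restrict_iff' measurableSet_ball).2 (ae_of_all _ hK))
    _ = K / 2 * (finrank ℝ E / (finrank ℝ E + 2) * μ.real (ball c r) * r ^ 2) := by
        rw [integral_const_mul, hmoment]

end MeasureTheory

theorem taylor_ball_estimate (d : ℕ) (hd : 0 < d)
    (c : EuclideanSpace ℝ (Fin d)) (r : ℝ) (hr : 0 < r) (M : ℝ) (hM : 0 ≤ M)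
    (f : EuclideanSpace ℝ (Fin d) → ℝ)
    (hf : ContDiffOn ℝ 2 f (Metric.closedBall c r))
    (hbound : ∀ ϑ ∈ Metric.closedBall c r, ∀ i j : Fin d,
      |fderiv ℝ (fun y => fderiv ℝ f y (EuclideanSpace.single i (1:ℝ))) ϑ
        (EuclideanSpace.single j (1:ℝ))| ≤ M) :
    |(∫ ϑ in Metric.closedBall c r, f ϑ)
        - f c * (volume (Metric.closedBall c r)).toReal|
      ≤ (M * (d : ℝ) ^ 2 / 2) * ((d : ℝ) / ((d : ℝ) + 2))
        * (volume (Metric.closedBall c r)).toReal * r ^ 2 := by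
  have : Nonempty (Fin d) := ⟨⟨0, hd⟩⟩
  have hC2 : ∀ x ∈ ball c r, ContDiffAt ℝ 2 f x := fun x hx =>
    (hf.mono ball_subset_closedBall).contDiffAt (isOpen_ball.mem_nhds hx)
  have hf₁ : ∀ x ∈ ball c r, DifferentiableAt ℝ f x := fun x hx =>
    (hC2 x hx).differentiableAt (by norm_num)
  have hf₂ : ∀ x ∈ ball c r, DifferentiableAt ℝ (fderiv ℝ f) x := fun x hx =>
    ((hC2 x hx).fderiv_right (m := 1) (by norm_num)).differentiableAt (by norm_num)
  have hHess : ∀ x ∈ ball c r, ‖fderiv ℝ (fderiv ℝ f) x‖ ≤ d * M := fun x hx => by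
    simpa using EuclideanSpace.norm_fderiv_fderiv_le_card_mul hM (hf₂ x hx)
      (hbound x (ball_subset_closedBall hx))
  have hTaylor : ∀ x ∈ ball c r, |f x - f c - fderiv ℝ f c (x - c)| ≤ d * M / 2 * ‖x - c‖ ^ 2 :=
    fun x hx => by
      simpa only [Real.norm_eq_abs] using
        (convex_ball c r).norm_sub_sub_fderiv_le hf₁ hf₂ hHess (mem_ball_self hr) hx
  have hint : IntegrableOn f (ball c r) :=
    (hf.continuousOn.integrableOn_compact (isCompact_closedBall c r)).mono_set
      ball_subset_closedBall
  have hball := Measure.addHaar_ball_ae_eq_closedBall volume c r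
  have key := abs_setIntegral_ball_sub_le volume hr.le hint (fderiv ℝ f c) hTaylor
  rw [finrank_euclideanSpace_fin, setIntegral_congr_set hball, measureReal_congr hball] at key
  have hd2 : (d : ℝ) ≤ d ^ 2 := by exact_mod_cast Nat.le_self_pow two_ne_zero d
  calc _ ≤ _ := key
    _ ≤ M * d ^ 2 / 2 * (d / (d + 2) * volume.real (closedBall c r) * r ^ 2) := by
      gcongr ?_ * _
      linarith [mul_le_mul_of_nonneg_left hd2 hM]
    _ = _ := by rw [measureReal_def]; ring
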